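/- arXiv:1906.06336 — 4 statements merged into one kernel-verified Lean document; each statement's English description precedes it below -/
import Mathlib

section
/- (Feller coupling, distributional identity.) For every $\theta > 0$, every natural number $n \geq 1$ and every $1 \leq j \leq n$: $$\frac{\#\{\sigma \in \mathfrak{S}_n : c(\sigma) = j\}\, \theta^{j}}{\theta^{(n)}} \;=\; \sum_{\substack{A \subseteq \{2,\ldots,n\} \\ \#A = j-1}} \; \prod_{k \in A} \frac{\theta}{\theta+k-1} \prod_{k \in \{2,\ldots,n\} \setminus A} \frac{k-1}{\theta+k-1}.$$ In other words, the number of cycles of an Ewens$(n,\theta)$ permutation has the same distribution as $1 + \sum_{k=2}^{n} B_k(\theta)$, where $(B_k(\theta))_{k=2}^{n}$ are independent Bernoulli random variables with success parameter $\theta/(\theta+k-1)$. -/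
open Finset

/-- Number of cycles of a permutation of `{1,…,n}`, counting fixed points as
cycles of length one. -/
def cycleCount {n : ℕ} (σ : Equiv.Perm (Fin n)) : ℕ :=
  σ.cycleType.card + (Finset.univ.filter fun x => σ x = x).card

section Aux

open Equiv Equiv.Perm Polynomial List

variable {α : Type*} [Fintype α] [DecidableEq α]

def cc (f : Perm α) : ℕ := f.cycleType.card + (Finset.univ.filter fun x => f x = x).card

lemma filter_fixed_eq (f : Perm α) :
    (Finset.univ.filter fun x => f x = x) = f.supportᶜ := by
  ext x; simp [Equiv.Perm.mem_support, not_not]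

lemma cc_eq (f : Perm α) :
    cc f = f.cycleType.card + (Fintype.card α - f.support.card) := by
  rw [cc, filter_fixed_eq, Finset.card_compl]

lemma cc_swap_mul_of_not_fixed (f : Perm α) {a b : α} (hab : a ≠ b) (hb : f b ≠ b)
    (ha : f a = a) : cc (swap a b * f) + 1 = cc f := by
  have hasupp : a ∉ f.support := by simp [ha]
  have hbsupp : b ∈ f.support := mem_support.2 hb
  set c := f.cycleOf b with hc
  have hcmem : c ∈ f.cycleFactorsFinset := (cycleOf_mem_cycleFactorsFinset_iff).2 hbsupp
  have hcyc : c.IsCycle := (mem_cycleFactorsFinset_iff.1 hcmem).1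
  have hdisj : Perm.Disjoint (f * c⁻¹) c := disjoint_mul_inv_of_mem_cycleFactorsFinset hcmem
  set g := f * c⁻¹ with hg
  have hfg : g * c = f := by rw [hg]; group
  set l := f.toList b with hl
  have hform : l.formPerm = c := formPerm_toList f b
  have hl2 : 2 ≤ l.length := two_le_length_toList_iff_mem_support.2 hbsupp
  have hnodupl : l.Nodup := nodup_toList f b
  have hal : a ∉ l := by
    intro hmem
    have := (mem_toList_iff.1 hmem)
    exact hasupp (this.1.mem_support_iff.1 this.2)
  have hsubc : c.support ⊆ f.support := mem_cycleFactorsFinset_support_le hcmem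
  have hltofin : l.toFinset = c.support := by
    rw [← hform]
    exact (support_formPerm_of_nodup l hnodupl (fun x => toList_ne_singleton f b x)).symm
  -- l = b :: tail
  obtain ⟨hd, t, hlt0⟩ : ∃ hd t, l = hd :: t := by
    cases hlx : l with
    | nil => rw [hlx] at hl2; simp at hl2
    | cons hd t => exact ⟨hd, t, rfl⟩
  have hhd : hd = b := by
    have h0 : l[0]'(by omega) = b := toList_getElem_zero f b hbsupp
    simpa [hlt0] using h0
  have hlt : l = b :: t := by rw [hlt0, hhd]
  -- the joined cycle
  have hkey : swap a b * c = (a :: l).formPerm := by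
    rw [hlt, formPerm_cons_cons, ← hlt, hform]
  have hnodupal : (a :: l).Nodup := List.nodup_cons.2 ⟨hal, hnodupl⟩
  have hkcyc : (swap a b * c).IsCycle := by
    rw [hkey]
    exact List.isCycle_formPerm hnodupal (by rw [List.length_cons]; omega)
  have hksupp : (swap a b * c).support = insert a c.support := by
    rw [hkey, support_formPerm_of_nodup _ hnodupal
      (by intro x hx; have := congr_arg List.length hx; rw [List.length_cons, List.length_singleton] at this; omega)]
    simp [← hltofin]
  -- disjointness of joined cycle and rest
  have hgsupp : g.support ⊆ f.support := by
    rw [← hfg, hdisj.support_mul]; exact subset_union_left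
  have hdisj2 : Perm.Disjoint (swap a b * c) g := by
    intro x
    by_cases hxk : x ∈ (swap a b * c).support
    · rw [hksupp, Finset.mem_insert] at hxk
      right
      rcases hxk with rfl | hxc
      · exact notMem_support.1 fun hc' => hasupp (hgsupp hc')
      · rcases hdisj x with h1 | h2
        · exact h1
        · exact (mem_support.1 hxc h2).elim
    · left; exact notMem_support.1 hxk
  have hmul : swap a b * f = (swap a b * c) * g := by
    rw [← hfg, hdisj.commute.eq, ← mul_assoc]
  -- cycle types
  have hctf : f.cycleType = c.cycleType + g.cycleType := by
    conv_lhs => rw [← hfg, hdisj.commute.eq, hdisj.symm.cycleType_mul]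
  have hct' : (swap a b * f).cycleType = (swap a b * c).cycleType + g.cycleType := by
    rw [hmul, hdisj2.cycleType_mul]
  -- supports
  have hsuppf : f.support = c.support ∪ g.support := by
    rw [← hfg, hdisj.support_mul, union_comm]
  have hsupp' : (swap a b * f).support = insert a f.support := by
    rw [hmul, hdisj2.support_mul, hksupp, hsuppf, insert_union]
  -- cardinalities
  have hcard' : (swap a b * f).support.card = f.support.card + 1 := by
    rw [hsupp', Finset.card_insert_of_notMem hasupp]
  have hle : (swap a b * f).support.card ≤ Fintype.card α := by
    simpa using Finset.card_le_card (Finset.subset_univ (swap a b * f).support)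
  have hctcard : Multiset.card (swap a b * f).cycleType = Multiset.card f.cycleType := by
    rw [hct', hctf, hcyc.cycleType, hkcyc.cycleType]; simp
  rw [cc_eq, cc_eq, hctcard, hcard']
  omega

lemma cc_swap_mul_of_fixed (f : Perm α) {a b : α} (hab : a ≠ b) (hb : f b = b)
    (ha : f a = a) : cc (swap a b * f) + 1 = cc f := by
  have hasupp : a ∉ f.support := by simp [ha]
  have hbsupp : b ∉ f.support := by simp [hb]
  have hd : Perm.Disjoint (swap a b) f := by
    intro x
    by_cases hxa : x = a
    · right; rw [hxa, ha]
    by_cases hxb : x = b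
    · right; rw [hxb, hb]
    · left; exact swap_apply_of_ne_of_ne hxa hxb
  have hct : Multiset.card (swap a b * f).cycleType = Multiset.card f.cycleType + 1 := by
    rw [hd.cycleType_mul, (isCycle_swap hab).cycleType]; simp [add_comm]
  have hsupp : (swap a b * f).support = {a, b} ∪ f.support := by
    rw [hd.support_mul, support_swap hab]
  have hcard : (swap a b * f).support.card = f.support.card + 2 := by
    rw [hsupp, Finset.card_union_of_disjoint, Finset.card_pair hab, add_comm]
    simp [Finset.disjoint_left, hasupp, hbsupp]
    exact ⟨ha, hb⟩
  have hle : (swap a b * f).support.card ≤ Fintype.card α := by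
    simpa using Finset.card_le_card (Finset.subset_univ (swap a b * f).support)
  rw [cc_eq, cc_eq, hct, hcard]
  omega

lemma decomposeFin_symm_zero_eq {n : ℕ} (e : Perm (Fin n)) :
    Equiv.Perm.decomposeFin.symm (0, e) = e.extendDomain (finSuccAboveEquiv 0) := by
  ext x
  refine Fin.cases ?_ (fun i => ?_) x
  · rw [Equiv.Perm.decomposeFin_symm_apply_zero,
      Equiv.Perm.extendDomain_apply_not_subtype _ _ (by simp)]
  · rw [Equiv.Perm.decomposeFin_symm_apply_succ]
    have h1 : (i.succ : Fin (n+1)) = ((finSuccAboveEquiv (0 : Fin (n+1))) i : Fin (n+1)) := by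
      simp [finSuccAboveEquiv_apply, Fin.zero_succAbove]
    rw [h1, Equiv.Perm.extendDomain_apply_image]
    simp [finSuccAboveEquiv_apply, Fin.zero_succAbove]

lemma cc_decompose_zero {n : ℕ} (e : Perm (Fin n)) :
    cc (Equiv.Perm.decomposeFin.symm (0, e)) = cc e + 1 := by
  have hct : (Equiv.Perm.decomposeFin.symm (0, e)).cycleType = e.cycleType := by
    rw [decomposeFin_symm_zero_eq]
    exact Equiv.Perm.cycleType_extendDomain (finSuccAboveEquiv 0)
  have hfix : (Finset.univ.filter fun x => Equiv.Perm.decomposeFin.symm (0, e) x = x).card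
      = (Finset.univ.filter fun x => e x = x).card + 1 := by
    rw [Finset.card_filter, Finset.card_filter, Fin.sum_univ_succ]
    simp only [Equiv.Perm.decomposeFin_symm_apply_zero, Equiv.Perm.decomposeFin_symm_apply_succ,
      swap_self, Equiv.refl_apply]
    simp [Fin.succ_inj, add_comm]
  rw [cc, cc, hct, hfix, add_assoc]

lemma cc_decomposeFin {n : ℕ} (p : Fin (n+1)) (e : Perm (Fin n)) :
    cc (Equiv.Perm.decomposeFin.symm (p, e)) = cc e + if p = 0 then 1 else 0 := by
  by_cases hp : p = 0
  · rw [hp, if_pos rfl, cc_decompose_zero]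
  · rw [if_neg hp]
    set σ0 := Equiv.Perm.decomposeFin.symm ((0 : Fin (n+1)), e) with hσ0
    have hmul : Equiv.Perm.decomposeFin.symm (p, e) = swap 0 p * σ0 := by
      ext x
      refine Fin.cases ?_ (fun i => ?_) x
      · simp [hσ0]
      · simp [hσ0]
    have h0 : σ0 0 = 0 := by simp [hσ0]
    have key : cc (Equiv.Perm.decomposeFin.symm (p, e)) + 1 = cc σ0 := by
      rw [hmul]
      by_cases hfix : σ0 p = p
      · exact cc_swap_mul_of_fixed σ0 (Ne.symm hp) hfix h0
      · exact cc_swap_mul_of_not_fixed σ0 (Ne.symm hp) hfix h0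
    have h2 : cc σ0 = cc e + 1 := by rw [hσ0]; exact cc_decompose_zero e
    omega

lemma sum_pow_cc (n : ℕ) :
    (∑ σ : Perm (Fin n), (X:ℝ[X]) ^ cc σ) = ∏ i ∈ range n, (X + C (i:ℝ)) := by
  induction n with
  | zero =>
    rw [Finset.range_zero, Finset.prod_empty]
    rw [Finset.sum_eq_single_of_mem (1 : Perm (Fin 0)) (Finset.mem_univ _)
      (fun σ _ _ => by simp [Subsingleton.elim σ 1] at *)]
    have : cc (1 : Perm (Fin 0)) = 0 := by
      simp [cc, Equiv.Perm.cycleType_one]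
    rw [this, pow_zero]
  | succ n ih =>
    rw [Finset.univ_perm_fin_succ, Finset.sum_map, Finset.prod_range_succ, ← ih]
    have step : ∀ pe : Fin (n+1) × Perm (Fin n),
        (X:ℝ[X]) ^ cc (Equiv.Perm.decomposeFin.symm.toEmbedding pe)
          = X ^ (cc pe.2 + if pe.1 = 0 then 1 else 0) := by
      rintro ⟨p, e⟩
      simp only [Equiv.coe_toEmbedding]
      rw [cc_decomposeFin p e]
    rw [Finset.sum_congr rfl fun pe _ => step pe]
    rw [Fintype.sum_prod_type, Fin.sum_univ_succ]
    simp only [if_pos rfl, Fin.succ_ne_zero, if_neg, pow_add, pow_one, pow_zero, mul_one,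
      if_true, if_false, eq_self_iff_true]
    rw [Finset.sum_const, card_univ, Fintype.card_fin, nsmul_eq_mul, ← Finset.sum_mul]
    have : ((n : ℝ[X])) = C ((n : ℝ)) := by simp
    rw [this]
    ring

lemma range_eq_insert (n : ℕ) (hn : 1 ≤ n) :
    Finset.range n = insert 0 (Finset.Icc 1 (n-1)) := by
  ext i
  simp only [Finset.mem_range, Finset.mem_insert, Finset.mem_Icc]
  omega

lemma prod_shift {M : Type*} [CommMonoid M] (n : ℕ) (f : ℕ → M) :
    (∏ i ∈ Finset.Icc 1 (n-1), f i) = ∏ k ∈ Finset.Icc 2 n, f (k-1) := by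
  refine Finset.prod_bij' (fun i _ => i + 1) (fun k _ => k - 1) ?_ ?_ ?_ ?_ ?_
  · intro i hi; simp only [Finset.mem_Icc] at hi ⊢; omega
  · intro k hk; simp only [Finset.mem_Icc] at hk ⊢; omega
  · intro i _; simp
  · intro k hk; simp only [Finset.mem_Icc] at hk; show k - 1 + 1 = k; omega
  · intro i _; simp

lemma prod_split {M : Type*} [CommMonoid M] (n : ℕ) (hn : 1 ≤ n) (f : ℕ → M) :
    (∏ i ∈ Finset.range n, f i) = f 0 * ∏ k ∈ Finset.Icc 2 n, f (k-1) := by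
  rw [range_eq_insert n hn, Finset.prod_insert (by simp), prod_shift]

lemma card_Icc2 (n : ℕ) : (Finset.Icc 2 n).card = n - 1 := by
  rw [Nat.card_Icc]; omega

lemma card_eq_sum (n j : ℕ) (hn : 1 ≤ n) (hj1 : 1 ≤ j) (hjn : j ≤ n) :
    ((Finset.univ.filter fun σ : Perm (Fin n) => cc σ = j).card : ℝ)
      = ∑ t ∈ (Finset.Icc 2 n).powersetCard (n - j), ∏ k ∈ t, ((k:ℝ) - 1) := by
  have h := congr_arg (fun p : ℝ[X] => p.coeff j) (sum_pow_cc n)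
  -- LHS coefficient
  rw [finset_sum_coeff] at h
  simp only [coeff_X_pow] at h
  have hL : (∑ σ : Perm (Fin n), if j = cc σ then (1:ℝ) else 0)
      = ((Finset.univ.filter fun σ : Perm (Fin n) => cc σ = j).card : ℝ) := by
    rw [Finset.card_filter]
    push_cast
    exact Finset.sum_congr rfl fun σ _ => by rw [if_congr eq_comm rfl rfl]
  rw [hL] at h
  -- RHS coefficient
  have hsplit : (∏ i ∈ Finset.range n, ((X:ℝ[X]) + C (i:ℝ)))
      = X * ∏ k ∈ Finset.Icc 2 n, (X + C (((k:ℝ) - 1))) := by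
    rw [prod_split n hn fun i => (X:ℝ[X]) + C (i:ℝ)]
    · simp only [Nat.cast_zero, map_zero, add_zero]
      congr 1
      refine Finset.prod_congr rfl fun k hk => ?_
      rw [Finset.mem_Icc] at hk
      congr 1
      rw [Nat.cast_sub (by omega)]
      simp
  rw [hsplit] at h
  obtain ⟨m, rfl⟩ : ∃ m, j = m + 1 := ⟨j - 1, by omega⟩
  rw [coeff_X_mul] at h
  rw [Finset.prod_X_add_C_coeff (Finset.Icc 2 n) (fun k => (k:ℝ) - 1)
    (by rw [card_Icc2]; omega)] at h
  rw [card_Icc2] at h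
  have hnm : n - 1 - m = n - (m + 1) := by omega
  rw [hnm] at h
  exact h

lemma compl_sum (n j : ℕ) (hj1 : 1 ≤ j) (hjn : j ≤ n) :
    (∑ t ∈ (Finset.Icc 2 n).powersetCard (n - j), ∏ k ∈ t, ((k:ℝ) - 1))
      = ∑ A ∈ (Finset.Icc 2 n).powersetCard (j - 1),
          ∏ k ∈ Finset.Icc 2 n \ A, ((k:ℝ) - 1) := by
  refine Finset.sum_bij' (fun t _ => Finset.Icc 2 n \ t) (fun A _ => Finset.Icc 2 n \ A)
    ?_ ?_ ?_ ?_ ?_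
  · intro t ht
    rw [Finset.mem_powersetCard] at ht ⊢
    refine ⟨Finset.sdiff_subset, ?_⟩
    rw [Finset.card_sdiff_of_subset ht.1, card_Icc2, ht.2]
    omega
  · intro A hA
    rw [Finset.mem_powersetCard] at hA ⊢
    refine ⟨Finset.sdiff_subset, ?_⟩
    rw [Finset.card_sdiff_of_subset hA.1, card_Icc2, hA.2]
    omega
  · intro t ht
    rw [Finset.mem_powersetCard] at ht
    exact Finset.sdiff_sdiff_eq_self ht.1
  · intro A hA
    rw [Finset.mem_powersetCard] at hA
    exact Finset.sdiff_sdiff_eq_self hA.1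
  · intro t ht
    rw [Finset.mem_powersetCard] at ht
    rw [Finset.sdiff_sdiff_eq_self ht.1]

end Aux

open Equiv Equiv.Perm in
/-- Feller coupling, distributional identity: the Ewens(n,θ) probability that the
number of cycles equals `j` coincides with the probability that `1 + ∑_{k=2}^n B_k(θ)`
equals `j`, where the `B_k(θ)` are independent Bernoulli with success parameter
`θ/(θ+k-1)`. -/
theorem feller_coupling_distributional_identity (θ : ℝ) (hθ : 0 < θ) (n : ℕ) (hn : 1 ≤ n)
    (j : ℕ) (hj1 : 1 ≤ j) (hjn : j ≤ n) :
    ((Finset.univ.filter fun σ : Equiv.Perm (Fin n) => cycleCount σ = j).card : ℝ) * θ ^ j /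
        (∏ i ∈ Finset.range n, (θ + i)) =
      ∑ A ∈ (Finset.Icc 2 n).powersetCard (j - 1),
        (∏ k ∈ A, θ / (θ + (k : ℝ) - 1)) *
          ∏ k ∈ Finset.Icc 2 n \ A, ((k : ℝ) - 1) / (θ + (k : ℝ) - 1) := by
  have hθ0 : θ ≠ 0 := ne_of_gt hθ
  have hDpos : 0 < ∏ k ∈ Finset.Icc 2 n, (θ + (k:ℝ) - 1) := by
    refine Finset.prod_pos fun k hk => ?_
    rw [Finset.mem_Icc] at hk
    have h2 : (2:ℝ) ≤ (k:ℝ) := by exact_mod_cast hk.1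
    linarith
  have hD0 : (∏ k ∈ Finset.Icc 2 n, (θ + (k:ℝ) - 1)) ≠ 0 := ne_of_gt hDpos
  have hden : (∏ i ∈ Finset.range n, (θ + (i:ℝ)))
      = θ * ∏ k ∈ Finset.Icc 2 n, (θ + (k:ℝ) - 1) := by
    rw [prod_split n hn fun i => θ + (i:ℝ)]
    congr 1
    · norm_num
    refine Finset.prod_congr rfl fun k hk => ?_
    rw [Finset.mem_Icc] at hk
    rw [Nat.cast_sub (by omega)]
    push_cast
    ring
  have hterm : ∀ A ∈ (Finset.Icc 2 n).powersetCard (j-1),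
      (∏ k ∈ A, θ / (θ + (k:ℝ) - 1)) *
          ∏ k ∈ Finset.Icc 2 n \ A, ((k:ℝ) - 1) / (θ + (k:ℝ) - 1)
      = (∏ k ∈ Finset.Icc 2 n \ A, ((k:ℝ) - 1)) * θ^(j-1) /
          ∏ k ∈ Finset.Icc 2 n, (θ + (k:ℝ) - 1) := by
    intro A hA
    rw [Finset.mem_powersetCard] at hA
    rw [Finset.prod_div_distrib, Finset.prod_div_distrib, Finset.prod_const, hA.2,
      div_mul_div_comm, mul_comm (∏ k ∈ A, (θ + (k:ℝ) - 1)) _, Finset.prod_sdiff hA.1,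
      mul_comm (θ^(j-1)) _]
  rw [Finset.sum_congr rfl hterm, ← Finset.sum_div, ← Finset.sum_mul,
    ← compl_sum n j hj1 hjn]
  have hcard : ((Finset.univ.filter fun σ : Equiv.Perm (Fin n) => cycleCount σ = j).card : ℝ)
      = ∑ t ∈ (Finset.Icc 2 n).powersetCard (n - j), ∏ k ∈ t, ((k:ℝ) - 1) :=
    card_eq_sum n j hn hj1 hjn
  rw [← hcard, hden]
  have hpow : θ ^ j = θ ^ (j-1) * θ := by rw [← pow_succ]; congr 1; omega
  rw [hpow]
  field_simp
end

section
/- Let $(\eta_k)_{k \geq 2}$ be independent random variables on a probability space, with $\eta_k$ exponentially distributed with rate $(k-1)/2$, and set $L_n := \sum_{k=2}^{n} \eta_k$ (the total length of Kingman's coalescent tree on $n$ leaves). Then almost surely $$\lim_{n \to \infty} \frac{L_n}{\log n} = 2.$$ -/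
open MeasureTheory ProbabilityTheory Finset Filter


open MeasureTheory ProbabilityTheory Finset Filter Set Real

lemma expMeasure_eq_withDensity (r : ℝ) :
    expMeasure r = MeasureTheory.volume.withDensity
      (fun x => ENNReal.ofReal (if 0 ≤ x then r * Real.exp (-(r * x)) else 0)) := by
  have h : (fun x => ENNReal.ofReal (if 0 ≤ x then r * Real.exp (-(r * x)) else 0))
      = exponentialPDF r := by
    funext x; rw [exponentialPDF_eq]
  rw [h]; rfl

lemma expMeasure_integral (r : ℝ) (hr : 0 < r) (g : ℝ → ℝ) :
    ∫ x, g x ∂(expMeasure r)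
      = ∫ x in Set.Ioi (0:ℝ), (r * Real.exp (-(r * x))) * g x := by
  classical
  set d : ℝ → ℝ := fun x => if 0 ≤ x then r * Real.exp (-(r * x)) else 0 with hd_def
  have hd_nonneg : ∀ x, 0 ≤ d x := by
    intro x
    simp only [hd_def]
    split
    · positivity
    · exact le_rfl
  set f : ℝ → NNReal := fun x => Real.toNNReal (d x) with hf_def
  have hf_meas : Measurable f := by
    apply Measurable.real_toNNReal
    apply Measurable.ite measurableSet_Ici _ measurable_const
    fun_prop
  have hmeq : expMeasure r = MeasureTheory.volume.withDensity (fun x => (f x : ENNReal)) := by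
    rw [expMeasure_eq_withDensity r]
    rfl
  rw [hmeq, integral_withDensity_eq_integral_smul hf_meas g]
  have h1 : (fun x => f x • g x) = Set.indicator (Set.Ici 0)
      (fun x => (r * Real.exp (-(r * x))) * g x) := by
    funext x
    have hfc : (f x : ℝ) = d x := Real.coe_toNNReal _ (hd_nonneg x)
    rw [NNReal.smul_def, smul_eq_mul, hfc]
    by_cases hx : (0:ℝ) ≤ x <;> simp [hd_def, Set.indicator, hx]
  rw [h1, integral_indicator measurableSet_Ici, integral_Ici_eq_integral_Ioi]

lemma expMeasure_integrable_pow (r : ℝ) (hr : 0 < r) (n : ℕ) :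
    Integrable (fun x : ℝ => x ^ n) (expMeasure r) := by
  classical
  set d : ℝ → ℝ := fun x => if 0 ≤ x then r * Real.exp (-(r * x)) else 0 with hd_def
  have hd_meas : Measurable d := by
    apply Measurable.ite measurableSet_Ici _ measurable_const
    fun_prop
  have hd_nonneg : ∀ x, 0 ≤ d x := by
    intro x
    simp only [hd_def]
    split
    · positivity
    · exact le_rfl
  rw [expMeasure_eq_withDensity r]
  rw [integrable_withDensity_iff (hd_meas.ennreal_ofReal) (by
    filter_upwards with x using ENNReal.ofReal_lt_top)]
  have key : IntegrableOn (fun x : ℝ => x ^ n * d x) (Set.Ici (0:ℝ)) := by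
    rw [integrableOn_Ici_iff_integrableOn_Ioi]
    have base := integrableOn_rpow_mul_exp_neg_mul_rpow (p := 1) (s := (n:ℝ)) (b := r)
      (lt_of_lt_of_le neg_one_lt_zero (Nat.cast_nonneg n)) zero_lt_one hr
    have h2 : IntegrableOn (fun x : ℝ => x ^ n * Real.exp (-r * x)) (Set.Ioi (0:ℝ)) := by
      refine base.congr_fun (fun x hx => ?_) measurableSet_Ioi
      beta_reduce
      rw [Real.rpow_one, Real.rpow_natCast]
    have h3 : IntegrableOn (fun x : ℝ => r * (x ^ n * Real.exp (-r * x))) (Set.Ioi (0:ℝ)) :=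
      h2.const_mul r
    refine h3.congr_fun (fun x hx => ?_) measurableSet_Ioi
    have hx0 : (0:ℝ) ≤ x := le_of_lt hx
    simp only [hd_def, if_pos hx0]
    ring_nf
  have hInt : Integrable (fun x : ℝ => x ^ n * d x) := by
    refine key.integrable_of_forall_notMem_eq_zero ?_
    intro x hx
    have hx' : ¬ (0:ℝ) ≤ x := by simpa using hx
    simp [hd_def, hx']
  refine hInt.congr (Filter.Eventually.of_forall fun x => ?_)
  show x ^ n * d x = x ^ n * (ENNReal.ofReal (d x)).toReal
  rw [ENNReal.toReal_ofReal (hd_nonneg x)]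

lemma expMeasure_moment (r : ℝ) (hr : 0 < r) (n : ℕ) :
    ∫ x, x ^ n ∂(expMeasure r) = n.factorial / r ^ n := by
  rw [expMeasure_integral r hr]
  have h1 : ∫ x in Set.Ioi (0:ℝ), (r * Real.exp (-(r * x))) * x ^ n
      = r * ∫ x in Set.Ioi (0:ℝ), x ^ ((n:ℝ) + 1 - 1) * Real.exp (-(r * x)) := by
    rw [← integral_const_mul]
    refine setIntegral_congr_fun measurableSet_Ioi (fun x hx => ?_)
    rw [show (n:ℝ) + 1 - 1 = (n:ℝ) by ring, Real.rpow_natCast]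
    ring
  rw [h1, Real.integral_rpow_mul_exp_neg_mul_Ioi (by positivity) hr,
    Real.Gamma_nat_eq_factorial]
  have h2 : (1/r) ^ ((n:ℝ)+1) = (1/r)^(n+1:ℕ) := by
    rw [← Real.rpow_natCast (1/r) (n+1)]; norm_num
  rw [h2]
  have hr0 : r ≠ 0 := hr.ne'
  field_simp
  rw [div_pow, one_pow, pow_succ]
  field_simp

lemma expMeasure_Iio_zero (r : ℝ) : expMeasure r (Set.Iio 0) = 0 := by
  have h : expMeasure r (Set.Iio 0) = ∫⁻ x in Set.Iio 0, exponentialPDF r x := by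
    rw [show expMeasure r = MeasureTheory.volume.withDensity (exponentialPDF r) from rfl,
      withDensity_apply _ measurableSet_Iio]
  rw [h, lintegral_exponentialPDF_of_nonpos le_rfl]

open MeasureTheory ProbabilityTheory Finset Filter Set Real

section transfer
variable {Ω : Type*} [MeasureSpace Ω] [IsProbabilityMeasure (ℙ : Measure Ω)]
  {X : Ω → ℝ} {r : ℝ}

lemma eta_memLp (hr : 0 < r) (hm : Measurable X) (hl : Measure.map X ℙ = expMeasure r) :
    MemLp X 2 ℙ := by
  have h0 : MemLp (id : ℝ → ℝ) 2 (expMeasure r) := by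
    rw [memLp_two_iff_integrable_sq aestronglyMeasurable_id]
    exact (expMeasure_integrable_pow r hr 2).congr (Filter.Eventually.of_forall (by simp))
  have h1 : MemLp (id : ℝ → ℝ) 2 (Measure.map X ℙ) := by rw [hl]; exact h0
  exact (memLp_map_measure_iff aestronglyMeasurable_id hm.aemeasurable).1 h1

lemma eta_integral (hr : 0 < r) (hm : Measurable X) (hl : Measure.map X ℙ = expMeasure r) :
    ∫ ω, X ω ∂ℙ = 1 / r := by
  have h1 : ∫ x, x ∂(Measure.map X ℙ) = ∫ ω, X ω ∂ℙ :=
    integral_map hm.aemeasurable aestronglyMeasurable_id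
  rw [← h1, hl]
  have := expMeasure_moment r hr 1
  simpa using this

lemma eta_integral_sq (hr : 0 < r) (hm : Measurable X) (hl : Measure.map X ℙ = expMeasure r) :
    ∫ ω, (X ω) ^ 2 ∂ℙ = 2 / r ^ 2 := by
  have h1 : ∫ x, x ^ 2 ∂(Measure.map X ℙ) = ∫ ω, (X ω) ^ 2 ∂ℙ :=
    integral_map hm.aemeasurable (measurable_id.pow_const 2).aestronglyMeasurable
  rw [← h1, hl, expMeasure_moment r hr 2]
  norm_num

lemma eta_variance (hr : 0 < r) (hm : Measurable X) (hl : Measure.map X ℙ = expMeasure r) :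
    variance X ℙ = 1 / r ^ 2 := by
  rw [variance_eq_sub (eta_memLp hr hm hl)]
  have h2 : ∫ ω, (X ^ 2) ω ∂ℙ = 2 / r ^ 2 := by
    simpa [Pi.pow_apply] using eta_integral_sq hr hm hl
  rw [h2, eta_integral hr hm hl]
  field_simp
  ring

lemma eta_nonneg (hm : Measurable X) (hl : Measure.map X ℙ = expMeasure r) :
    ∀ᵐ ω ∂ℙ, 0 ≤ X ω := by
  rw [ae_iff]
  have h1 : {ω | ¬ 0 ≤ X ω} = X ⁻¹' (Set.Iio 0) := by
    ext ω; simp [not_le]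
  rw [h1, ← Measure.map_apply hm measurableSet_Iio, hl, expMeasure_Iio_zero]

end transfer

lemma sum_Icc_mean (n : ℕ) :
    ∑ k ∈ Finset.Icc 2 n, 2 / ((k:ℝ) - 1) = 2 * (harmonic (n-1) : ℝ) := by
  rw [← Finset.Ico_add_one_right_eq_Icc, Finset.sum_Ico_eq_sum_range]
  have h1 : n + 1 - 2 = n - 1 := by omega
  rw [h1, harmonic]
  push_cast
  rw [Finset.mul_sum]
  refine Finset.sum_congr rfl fun i _ => ?_
  rw [show (2:ℝ) + (i:ℝ) - 1 = (i:ℝ) + 1 by ring]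
  field_simp

lemma summable_inv_sq_succ : Summable (fun j : ℕ => 4 / ((j:ℝ) + 1) ^ 2) := by
  have base : Summable (fun n : ℕ => (1:ℝ) / (n:ℝ) ^ 2) :=
    Real.summable_one_div_nat_pow.mpr one_lt_two
  have h1 : Summable (fun j : ℕ => (1:ℝ) / ((j:ℝ) + 1) ^ 2) := by
    have := (summable_nat_add_iff (f := fun n : ℕ => (1:ℝ) / (n:ℝ) ^ 2) 1).mpr base
    refine this.congr fun j => ?_
    push_cast
    ring
  have := h1.mul_left 4
  refine this.congr fun j => ?_
  ring

lemma sum_Icc_var_le (n : ℕ) :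
    ∑ k ∈ Finset.Icc 2 n, 4 / ((k:ℝ) - 1) ^ 2 ≤ ∑' j : ℕ, 4 / ((j:ℝ) + 1) ^ 2 := by
  rw [← Finset.Ico_add_one_right_eq_Icc, Finset.sum_Ico_eq_sum_range]
  have heq : ∀ i, 4 / (((2 + i : ℕ) : ℝ) - 1) ^ 2 = 4 / ((i:ℝ) + 1) ^ 2 := by
    intro i
    have : ((2 + i : ℕ) : ℝ) - 1 = (i : ℝ) + 1 := by push_cast; ring
    rw [this]
  calc ∑ i ∈ Finset.range (n + 1 - 2), 4 / (((2 + i : ℕ) : ℝ) - 1) ^ 2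
      = ∑ i ∈ Finset.range (n + 1 - 2), 4 / ((i:ℝ) + 1) ^ 2 :=
        Finset.sum_congr rfl fun i _ => heq i
    _ ≤ ∑' j : ℕ, 4 / ((j:ℝ) + 1) ^ 2 :=
        Summable.sum_le_tsum _ (fun i _ => by positivity) summable_inv_sq_succ

lemma nat_log_tendsto : Tendsto (Nat.log 2) atTop atTop := by
  refine tendsto_atTop_atTop_of_monotone Nat.log_monotone fun b => ⟨2 ^ b, ?_⟩
  rw [Nat.log_pow one_lt_two]

open Finset Filter Real

lemma nat_log_tendsto' : Tendsto (Nat.log 2) atTop atTop := by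
  refine tendsto_atTop_atTop_of_monotone Nat.log_monotone fun b => ⟨2 ^ b, ?_⟩
  rw [Nat.log_pow one_lt_two]

lemma pointwise_limit (S : ℕ → ℝ) (E : ℕ → ℝ)
    (hE : ∀ n, E n = 2 * (harmonic (n - 1) : ℝ))
    (hmono : Monotone S) (hpos : ∀ n, 0 ≤ S n)
    (hC : ∀ m : ℕ, ∀ᶠ j : ℕ in atTop,
      |S (2 ^ (j + 1)) - E (2 ^ (j + 1))| < ((j : ℝ) + 1) / ((m : ℝ) + 1)) :
    Tendsto (fun n : ℕ => S n / Real.log n) atTop (nhds 2) := by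
  have hlog2 : (0:ℝ) < Real.log 2 := Real.log_pos one_lt_two
  set Z : ℕ → ℝ := fun j => (S (2 ^ j) - E (2 ^ j)) / (j : ℝ) with hZ
  -- step 1 : fluctuations
  have p1 : Tendsto Z atTop (nhds 0) := by
    rw [Metric.tendsto_atTop]
    intro ε hε
    obtain ⟨m, hm⟩ := exists_nat_one_div_lt hε
    obtain ⟨N, hN⟩ := eventually_atTop.1 (hC m)
    refine ⟨N + 1, fun j hj => ?_⟩
    obtain ⟨i, rfl⟩ : ∃ i, j = i + 1 := ⟨j - 1, by omega⟩
    have h1 := hN i (by omega)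
    rw [Real.dist_eq, sub_zero]
    have hip : (0:ℝ) < (i:ℝ) + 1 := by positivity
    have hcast : ((i + 1 : ℕ) : ℝ) = (i:ℝ) + 1 := by push_cast; ring
    have hZi : |Z (i + 1)| = |S (2 ^ (i + 1)) - E (2 ^ (i + 1))| / ((i:ℝ) + 1) := by
      rw [hZ]; simp only [hcast]
      rw [abs_div, abs_of_pos hip]
    rw [hZi]
    have h2 : |S (2 ^ (i + 1)) - E (2 ^ (i + 1))| / ((i:ℝ) + 1)
        < (((i:ℝ) + 1) / ((m:ℝ) + 1)) / ((i:ℝ) + 1) := by gcongr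
    have h3 : (((i:ℝ) + 1) / ((m:ℝ) + 1)) / ((i:ℝ) + 1) = 1 / ((m:ℝ) + 1) := by
      field_simp
    linarith
  -- step 2 : mean asymptotics
  have p2 : Tendsto (fun j : ℕ => E (2 ^ j) / ((j:ℝ) * Real.log 2)) atTop (nhds 2) := by
    have hup : Tendsto (fun j : ℕ => 2 + (2 / Real.log 2) / (j:ℝ)) atTop (nhds 2) := by
      have := tendsto_const_div_atTop_nhds_zero_nat (2 / Real.log 2)
      have h := tendsto_const_nhds (x := (2:ℝ)) (f := atTop (α := ℕ)) |>.add this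
      simpa using h
    refine tendsto_of_tendsto_of_tendsto_of_le_of_le' tendsto_const_nhds hup ?_ ?_
    · filter_upwards [eventually_ge_atTop 1] with j hj
      have hjp : (0:ℝ) < (j:ℝ) := by exact_mod_cast hj
      have hden : (0:ℝ) < (j:ℝ) * Real.log 2 := by positivity
      rw [le_div_iff₀ hden, hE]
      have hcast : ((2 ^ j - 1 + 1 : ℕ) : ℝ) = ((2:ℝ)) ^ j := by
        rw [Nat.sub_add_cancel Nat.one_le_two_pow]; push_cast; ring
      have hlog : Real.log (((2 ^ j - 1 + 1 : ℕ) : ℝ)) ≤ (harmonic (2 ^ j - 1) : ℝ) :=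
        log_add_one_le_harmonic _
      rw [hcast, Real.log_pow] at hlog
      have : 2 ^ j - 1 = 2 ^ j + 1 - 1 - 1 := by omega
      nlinarith [hlog]
    · filter_upwards [eventually_ge_atTop 1] with j hj
      have hjp : (0:ℝ) < (j:ℝ) := by exact_mod_cast hj
      have hden : (0:ℝ) < (j:ℝ) * Real.log 2 := by positivity
      rw [div_le_iff₀ hden, hE]
      have hhar : (harmonic (2 ^ j - 1) : ℝ) ≤ 1 + Real.log ((2 ^ j - 1 : ℕ) : ℝ) :=
        harmonic_le_one_add_log _
      have h2j : (1:ℕ) ≤ 2 ^ j - 1 := by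
        have : 2 ≤ 2 ^ j := by
          calc 2 = 2 ^ 1 := rfl
          _ ≤ 2 ^ j := Nat.pow_le_pow_right (by norm_num) hj
        omega
      have hloglog : Real.log ((2 ^ j - 1 : ℕ) : ℝ) ≤ Real.log ((2:ℝ) ^ j) := by
        apply Real.log_le_log (by exact_mod_cast h2j)
        have : (2 ^ j - 1 : ℕ) ≤ 2 ^ j := by omega
        calc ((2 ^ j - 1 : ℕ) : ℝ) ≤ ((2 ^ j : ℕ) : ℝ) := by exact_mod_cast this
          _ = (2:ℝ) ^ j := by push_cast; ring
      rw [Real.log_pow] at hloglog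
      have hfin : (harmonic (2 ^ j - 1) : ℝ) ≤ 1 + (j:ℝ) * Real.log 2 := by linarith
      have hexp : (2 + 2 / Real.log 2 / (j:ℝ)) * ((j:ℝ) * Real.log 2)
          = 2 * ((j:ℝ) * Real.log 2) + 2 := by field_simp
      rw [hexp]
      nlinarith
  -- step 3 : D_j
  set D : ℕ → ℝ := fun j => S (2 ^ j) / ((j:ℝ) * Real.log 2) with hD
  have p3 : Tendsto D atTop (nhds 2) := by
    have h1 : Tendsto (fun j : ℕ => Z j * (1 / Real.log 2) + E (2 ^ j) / ((j:ℝ) * Real.log 2))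
        atTop (nhds 2) := by
      have := (p1.mul_const (1 / Real.log 2)).add p2
      simpa using this
    refine Tendsto.congr' ?_ h1
    filter_upwards [eventually_ge_atTop 1] with j hj
    have hjp : ((j:ℝ)) ≠ 0 := by
      have : (0:ℝ) < (j:ℝ) := by exact_mod_cast hj
      linarith
    rw [hZ, hD]
    field_simp
    ring
  -- ratios
  have hratio1 : Tendsto (fun j : ℕ => (j:ℝ) / ((j:ℝ) + 1)) atTop (nhds 1) := by
    have h0 : Tendsto (fun j : ℕ => 1 - 1 / ((j:ℝ) + 1)) atTop (nhds 1) := by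
      have := tendsto_one_div_add_atTop_nhds_zero_nat (𝕜 := ℝ)
      have h := tendsto_const_nhds (x := (1:ℝ)) (f := atTop (α := ℕ)) |>.sub this
      simpa using h
    refine Tendsto.congr' ?_ h0
    filter_upwards with j
    have : ((j:ℝ) + 1) ≠ 0 := by positivity
    field_simp
    ring
  have hratio2 : Tendsto (fun j : ℕ => ((j:ℝ) + 1) / (j:ℝ)) atTop (nhds 1) := by
    have h0 : Tendsto (fun j : ℕ => 1 + 1 / (j:ℝ)) atTop (nhds 1) := by
      have := tendsto_const_div_atTop_nhds_zero_nat (1:ℝ)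
      have h := tendsto_const_nhds (x := (1:ℝ)) (f := atTop (α := ℕ)) |>.add this
      simpa using h
    refine Tendsto.congr' ?_ h0
    filter_upwards [eventually_ge_atTop 1] with j hj
    have : ((j:ℝ)) ≠ 0 := by
      have : (0:ℝ) < (j:ℝ) := by exact_mod_cast hj
      linarith
    field_simp
  set u : ℕ → ℝ := fun j => D j * ((j:ℝ) / ((j:ℝ) + 1)) with hu_def
  set v : ℕ → ℝ := fun j => D (j + 1) * (((j:ℝ) + 1) / (j:ℝ)) with hv_def
  have hu : Tendsto u atTop (nhds 2) := by
    have := p3.mul hratio1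
    simpa using this
  have hv : Tendsto v atTop (nhds 2) := by
    have hshift : Tendsto (fun j : ℕ => D (j + 1)) atTop (nhds 2) :=
      p3.comp (tendsto_add_atTop_nat 1)
    have := hshift.mul hratio2
    simpa using this
  -- final squeeze
  have hlogt := nat_log_tendsto'
  refine tendsto_of_tendsto_of_tendsto_of_le_of_le' (hu.comp hlogt) (hv.comp hlogt) ?_ ?_
  · filter_upwards [eventually_ge_atTop 2] with n hn
    set j := Nat.log 2 n with hj_def
    have hj1 : 1 ≤ j := by
      rw [hj_def]
      exact Nat.le_log_of_pow_le one_lt_two (by simpa using hn)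
    have hjp : (0:ℝ) < (j:ℝ) := by exact_mod_cast hj1
    have h2n : 2 ^ j ≤ n := Nat.pow_log_le_self 2 (by omega)
    have hn2 : n < 2 ^ (j + 1) := Nat.lt_pow_succ_log_self one_lt_two n
    have hlogn_pos : (0:ℝ) < Real.log n := by
      apply Real.log_pos
      have : (2:ℝ) ≤ (n:ℝ) := by exact_mod_cast hn
      linarith
    have hlogn_le : Real.log n ≤ ((j:ℝ) + 1) * Real.log 2 := by
      have h1 : (n:ℝ) ≤ (2:ℝ) ^ (j + 1) := by
        have := hn2.le
        calc (n:ℝ) ≤ ((2 ^ (j+1) : ℕ) : ℝ) := by exact_mod_cast this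
          _ = (2:ℝ) ^ (j+1) := by push_cast; ring
      have := Real.log_le_log (by positivity : (0:ℝ) < (n:ℝ)) h1
      rwa [Real.log_pow, Nat.cast_add, Nat.cast_one] at this
    show u j ≤ S n / Real.log n
    have hSu : S (2 ^ j) ≤ S n := hmono h2n
    have hden1 : (0:ℝ) < ((j:ℝ) + 1) * Real.log 2 := by positivity
    have hueq : u j = S (2 ^ j) / (((j:ℝ) + 1) * Real.log 2) := by
      simp only [hu_def, hD]
      field_simp
    rw [hueq]
    calc S (2 ^ j) / (((j:ℝ) + 1) * Real.log 2) ≤ S (2 ^ j) / Real.log n := by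
          apply div_le_div_of_nonneg_left (hpos _) hlogn_pos hlogn_le
      _ ≤ S n / Real.log n := by gcongr
  · filter_upwards [eventually_ge_atTop 2] with n hn
    set j := Nat.log 2 n with hj_def
    have hj1 : 1 ≤ j := by
      rw [hj_def]
      exact Nat.le_log_of_pow_le one_lt_two (by simpa using hn)
    have hjp : (0:ℝ) < (j:ℝ) := by exact_mod_cast hj1
    have h2n : 2 ^ j ≤ n := Nat.pow_log_le_self 2 (by omega)
    have hn2 : n < 2 ^ (j + 1) := Nat.lt_pow_succ_log_self one_lt_two n
    have hlogn_pos : (0:ℝ) < Real.log n := by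
      apply Real.log_pos
      have : (2:ℝ) ≤ (n:ℝ) := by exact_mod_cast hn
      linarith
    have hlogn_ge : (j:ℝ) * Real.log 2 ≤ Real.log n := by
      have h1 : (2:ℝ) ^ j ≤ (n:ℝ) := by
        calc (2:ℝ) ^ j = ((2 ^ j : ℕ) : ℝ) := by push_cast; ring
          _ ≤ (n:ℝ) := by exact_mod_cast h2n
      have := Real.log_le_log (by positivity : (0:ℝ) < (2:ℝ) ^ j) h1
      rwa [Real.log_pow] at this
    show S n / Real.log n ≤ v j
    have hSu : S n ≤ S (2 ^ (j + 1)) := hmono hn2.le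
    have hveq : v j = S (2 ^ (j + 1)) / ((j:ℝ) * Real.log 2) := by
      simp only [hv_def, hD]
      push_cast
      field_simp
    rw [hveq]
    calc S n / Real.log n ≤ S (2 ^ (j + 1)) / Real.log n := by gcongr
      _ ≤ S (2 ^ (j + 1)) / ((j:ℝ) * Real.log 2) := by
          apply div_le_div_of_nonneg_left (hpos _) (by positivity) hlogn_ge

open MeasureTheory ProbabilityTheory Finset Filter


/-- Strong law for the total length of Kingman's coalescent tree: if the `η_k`,
`k ≥ 2`, are independent and `η_k` is exponential with rate `(k-1)/2`, then
`L_n / log n = (∑_{k=2}^n η_k)/log n → 2` almost surely. -/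
theorem kingman_tree_length_log_limit
    {Ω : Type*} [MeasureSpace Ω] [IsProbabilityMeasure (ℙ : Measure Ω)]
    (η : ℕ → Ω → ℝ)
    (hmeas : ∀ k, 2 ≤ k → Measurable (η k))
    (hindep : iIndepFun (fun k : {m : ℕ // 2 ≤ m} => η (k : ℕ)) ℙ)
    (hlaw : ∀ k, 2 ≤ k → Measure.map (η k) ℙ = expMeasure (((k : ℝ) - 1) / 2)) :
    ∀ᵐ ω ∂ℙ, Tendsto (fun n : ℕ => (∑ k ∈ Finset.Icc 2 n, η k ω) / Real.log n)
      atTop (nhds 2) := by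
  classical
  set S : ℕ → Ω → ℝ := fun n ω => ∑ k ∈ Finset.Icc 2 n, η k ω with hS_def
  set E : ℕ → ℝ := fun n => ∑ k ∈ Finset.Icc 2 n, 2 / ((k:ℝ) - 1) with hE_def
  set C0 : ℝ := ∑' j : ℕ, 4 / ((j:ℝ) + 1) ^ 2 with hC0_def
  have hC0nn : 0 ≤ C0 := tsum_nonneg fun j => by positivity
  have hrpos : ∀ k : ℕ, 2 ≤ k → 0 < ((k:ℝ) - 1) / 2 := by
    intro k hk
    have : (2:ℝ) ≤ (k:ℝ) := by exact_mod_cast hk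
    linarith
  have hk1 : ∀ k : ℕ, 2 ≤ k → ((k:ℝ) - 1) ≠ 0 := by
    intro k hk
    have : (2:ℝ) ≤ (k:ℝ) := by exact_mod_cast hk
    linarith
  have hL2 : ∀ k, 2 ≤ k → MemLp (η k) 2 ℙ := fun k hk =>
    eta_memLp (hrpos k hk) (hmeas k hk) (hlaw k hk)
  have hmean : ∀ k, 2 ≤ k → ∫ ω, η k ω ∂ℙ = 2 / ((k:ℝ) - 1) := by
    intro k hk
    rw [eta_integral (hrpos k hk) (hmeas k hk) (hlaw k hk)]
    rw [one_div_div]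
  have hvar : ∀ k, 2 ≤ k → variance (η k) ℙ = 4 / ((k:ℝ) - 1) ^ 2 := by
    intro k hk
    rw [eta_variance (hrpos k hk) (hmeas k hk) (hlaw k hk)]
    have := hk1 k hk
    field_simp
    ring
  have hSfun : ∀ n, S n = ∑ k ∈ Finset.Icc 2 n, η k := by
    intro n
    funext ω
    simp [hS_def, Finset.sum_apply]
  have hSL2 : ∀ n, MemLp (S n) 2 ℙ := by
    intro n
    rw [hSfun n]
    exact memLp_finset_sum' (μ := (ℙ : Measure Ω)) (Finset.Icc 2 n)
      (f := η) (fun k hk => hL2 k (Finset.mem_Icc.1 hk).1)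
  have hES : ∀ n, ℙ[S n] = E n := by
    intro n
    rw [hS_def, hE_def]
    rw [integral_finset_sum _ (fun k hk => (hL2 k (Finset.mem_Icc.1 hk).1).integrable one_le_two)]
    exact Finset.sum_congr rfl fun k hk => hmean k (Finset.mem_Icc.1 hk).1
  have hvarS : ∀ n, variance (S n) ℙ ≤ C0 := by
    intro n
    have hfun := hSfun n
    have hpair : Set.Pairwise ↑(Finset.Icc 2 n) fun i j => IndepFun (η i) (η j) ℙ := by
      intro i hi j hj hij
      have hi2 : 2 ≤ i := (Finset.mem_Icc.1 (Finset.mem_coe.1 hi)).1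
      have hj2 : 2 ≤ j := (Finset.mem_Icc.1 (Finset.mem_coe.1 hj)).1
      exact hindep.indepFun (i := ⟨i, hi2⟩) (j := ⟨j, hj2⟩)
        (by simpa [Subtype.ext_iff] using hij)
    rw [hfun, IndepFun.variance_sum (fun k hk => hL2 k (Finset.mem_Icc.1 hk).1) hpair]
    calc ∑ k ∈ Finset.Icc 2 n, variance (η k) ℙ
        = ∑ k ∈ Finset.Icc 2 n, 4 / ((k:ℝ) - 1) ^ 2 :=
          Finset.sum_congr rfl fun k hk => hvar k (Finset.mem_Icc.1 hk).1
      _ ≤ C0 := sum_Icc_var_le n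
  -- Borel–Cantelli
  have hBC : ∀ m : ℕ, ∀ᵐ ω ∂ℙ, ∀ᶠ j : ℕ in atTop,
      |S (2 ^ (j + 1)) ω - E (2 ^ (j + 1))| < ((j:ℝ) + 1) / ((m:ℝ) + 1) := by
    intro m
    set s : ℕ → Set Ω := fun j =>
      {ω | ((j:ℝ) + 1) / ((m:ℝ) + 1) ≤ |S (2 ^ (j + 1)) ω - ℙ[S (2 ^ (j + 1))]|} with hs_def
    have hsle : ∀ j, ℙ (s j) ≤ ENNReal.ofReal ((C0 * ((m:ℝ) + 1) ^ 2) * (1 / ((j:ℝ) + 1) ^ 2)) := by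
      intro j
      have hc : (0:ℝ) < ((j:ℝ) + 1) / ((m:ℝ) + 1) := by positivity
      refine (meas_ge_le_variance_div_sq (hSL2 (2 ^ (j + 1))) hc).trans ?_
      apply ENNReal.ofReal_le_ofReal
      have h1 : variance (S (2 ^ (j + 1))) ℙ / (((j:ℝ) + 1) / ((m:ℝ) + 1)) ^ 2
          ≤ C0 / (((j:ℝ) + 1) / ((m:ℝ) + 1)) ^ 2 := by
        gcongr
        exact hvarS _
      refine h1.trans_eq ?_
      field_simp
    have hsummable : Summable (fun j : ℕ => (C0 * ((m:ℝ) + 1) ^ 2) * (1 / ((j:ℝ) + 1) ^ 2)) := by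
      have h1 := summable_inv_sq_succ.mul_left ((C0 * ((m:ℝ) + 1) ^ 2) / 4)
      refine h1.congr fun j => ?_
      field_simp
    have hsum : ∑' j, ℙ (s j) ≠ ⊤ := by
      have h2 : ∑' j, ℙ (s j)
          ≤ ∑' j : ℕ, ENNReal.ofReal ((C0 * ((m:ℝ) + 1) ^ 2) * (1 / ((j:ℝ) + 1) ^ 2)) :=
        ENNReal.tsum_le_tsum hsle
      have h3 : ∑' j : ℕ, ENNReal.ofReal ((C0 * ((m:ℝ) + 1) ^ 2) * (1 / ((j:ℝ) + 1) ^ 2))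
          = ENNReal.ofReal (∑' j : ℕ, (C0 * ((m:ℝ) + 1) ^ 2) * (1 / ((j:ℝ) + 1) ^ 2)) :=
        (ENNReal.ofReal_tsum_of_nonneg (fun j => by positivity) hsummable).symm
      exact ne_top_of_le_ne_top (h3 ▸ ENNReal.ofReal_ne_top) h2
    filter_upwards [ae_eventually_notMem hsum] with ω hω
    filter_upwards [hω] with j hj
    have h4 : ¬ ((j:ℝ) + 1) / ((m:ℝ) + 1) ≤ |S (2 ^ (j + 1)) ω - ℙ[S (2 ^ (j + 1))]| := hj
    rw [hES] at h4
    exact not_le.1 h4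
  have hBC' : ∀ᵐ ω ∂ℙ, ∀ m : ℕ, ∀ᶠ j : ℕ in atTop,
      |S (2 ^ (j + 1)) ω - E (2 ^ (j + 1))| < ((j:ℝ) + 1) / ((m:ℝ) + 1) := ae_all_iff.2 hBC
  have hnn : ∀ᵐ ω ∂ℙ, ∀ k : ℕ, 2 ≤ k → 0 ≤ η k ω := by
    rw [ae_all_iff]
    intro k
    by_cases hk : 2 ≤ k
    · filter_upwards [eta_nonneg (hmeas k hk) (hlaw k hk)] with ω h _
      exact h
    · filter_upwards with ω h
      exact absurd h hk
  filter_upwards [hBC', hnn] with ω hCω hNω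
  have hEeq : ∀ n, E n = 2 * (harmonic (n - 1) : ℝ) := fun n => sum_Icc_mean n
  have hmono : Monotone (fun n => S n ω) := by
    intro a b hab
    apply Finset.sum_le_sum_of_subset_of_nonneg
    · exact Finset.Icc_subset_Icc_right hab
    · intro k hk _
      exact hNω k (Finset.mem_Icc.1 hk).1
  have hpos : ∀ n, 0 ≤ S n ω :=
    fun n => Finset.sum_nonneg fun k hk => hNω k (Finset.mem_Icc.1 hk).1
  exact pointwise_limit (fun n => S n ω) E hEeq hmono hpos hCω
end

section
/- (Variance of $S - K$ in the coupling.) Let $\theta > 0$, $n \geq 2$, and let $C_2, \ldots, C_n$ be independent $\mathbb{N}$-valued random variables such that $C_k$ is geometrically distributed with success probability $(k-1)/(k-1+\theta)$ (so that, in the Poisson-process coupling of the number of segregating sites $S$ and the number of cycles $K$, one has $S - K + 1 = \sum_{k=2}^{n} (C_k - \mathds{1}\{C_k \geq 1\})$ in distribution). Then $$\mathrm{Var}\Big(\sum_{k=2}^{n} \big(C_k - \mathds{1}\{C_k \geq 1\}\big)\Big) = \sum_{k=2}^{n} \frac{\theta^2\big(\theta^2 + 3\theta(k-1) + (k-1)^2\big)}{(k-1)^2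 (k-1+\theta)^2}.$$ -/
open MeasureTheory ProbabilityTheory Finset

/-- Sum of `n^2 q^n`. -/
lemma hasSum_sq_mul_geometric {q : ℝ} (h0 : 0 ≤ q) (h1 : q < 1) :
    HasSum (fun n : ℕ => (n : ℝ) ^ 2 * q ^ n) (q * (1 + q) / (1 - q) ^ 3) := by
  have hq : ‖q‖ < 1 := by rw [Real.norm_eq_abs, abs_of_nonneg h0]; exact h1
  have h2 := hasSum_choose_mul_geometric_of_norm_lt_one 2 hq
  have hc := hasSum_coe_mul_geometric_of_norm_lt_one hq
  have hg := hasSum_geometric_of_lt_one h0 h1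
  have H := ((h2.mul_left 2).sub (hc.mul_left 3)).sub (hg.mul_left 2)
  have hfe : (fun n : ℕ => 2 * (((n + 2).choose 2 : ℝ) * q ^ n) - 3 * ((n : ℝ) * q ^ n)
      - 2 * q ^ n) = fun n : ℕ => (n : ℝ) ^ 2 * q ^ n := by
    funext n
    have : (((n + 2).choose 2 : ℕ) : ℝ) = (n + 2) * (n + 1) / 2 := by
      rw [Nat.cast_choose_two]; push_cast; ring
    rw [this]; ring
  rw [hfe] at H
  convert H using 1
  · rfl
  have hne : (1 : ℝ) - q ≠ 0 := by linarith
  field_simp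
  ring

/-- Integral of a function of a discrete (ℕ-valued) random variable. -/
lemma discrete_integral {Ω : Type*} [MeasureSpace Ω] {C : Ω → ℕ} (hm : Measurable C)
    {w : ℕ → ℝ} (hw : ∀ j, 0 ≤ w j)
    (hlaw : ∀ j, ℙ {ω | C ω = j} = ENNReal.ofReal (w j))
    (f : ℕ → ℝ) (hf : ∀ j, 0 ≤ f j) {S : ℝ}
    (hsum : HasSum (fun j => w j * f j) S) :
    Integrable (fun ω => f (C ω)) ℙ ∧ ∫ ω, f (C ω) ∂ℙ = S := by
  set μ := Measure.map C ℙ with hμdef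
  have hμ : ∀ j, μ {j} = ENNReal.ofReal (w j) := by
    intro j
    rw [hμdef, Measure.map_apply hm (measurableSet_singleton j)]
    exact hlaw j
  have hfi : Integrable f μ := by
    refine ⟨measurable_from_nat.aestronglyMeasurable, ?_⟩
    have : (∫⁻ a, ‖f a‖ₑ ∂μ) = ∑' a, ‖f a‖ₑ * μ {a} :=
      lintegral_countable' _
    rw [HasFiniteIntegral, this]
    have heq : ∀ a : ℕ, ‖f a‖ₑ * μ {a} = ENNReal.ofReal (w a * f a) := by
      intro a
      rw [hμ a, Real.enorm_eq_ofReal (hf a), ← ENNReal.ofReal_mul (hf a), mul_comm]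
    simp_rw [heq]
    rw [← ENNReal.ofReal_tsum_of_nonneg (fun a => mul_nonneg (hw a) (hf a)) hsum.summable]
    exact ENNReal.ofReal_lt_top
  have hint : Integrable (fun ω => f (C ω)) ℙ := by
    have := (integrable_map_measure measurable_from_nat.aestronglyMeasurable
      hm.aemeasurable).mp hfi
    exact this
  refine ⟨hint, ?_⟩
  have h1 : ∫ ω, f (C ω) ∂ℙ = ∫ a, f a ∂μ :=
    (integral_map hm.aemeasurable measurable_from_nat.aestronglyMeasurable).symm
  rw [h1, integral_countable' hfi]
  have : ∀ a : ℕ, μ.real {a} • f a = w a * f a := by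
    intro a
    rw [measureReal_def, hμ a, ENNReal.toReal_ofReal (hw a), smul_eq_mul]
  simp_rw [this]
  exact hsum.tsum_eq

/-- Variance of `C - 𝟙{C ≥ 1}` for a geometric variable. -/
lemma var_aux {Ω : Type*} [MeasureSpace Ω] [IsProbabilityMeasure (ℙ : Measure Ω)]
    {C : Ω → ℕ} (hm : Measurable C) {p q : ℝ} (hp : 0 < p) (hq : 0 < q)
    (hpq : p + q = 1)
    (hlaw : ∀ j, ℙ {ω | C ω = j} = ENNReal.ofReal (q ^ j * p)) :
    MemLp (fun ω => (C ω : ℝ) - if 1 ≤ C ω then 1 else 0) 2 ℙ ∧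
    variance (fun ω => (C ω : ℝ) - if 1 ≤ C ω then 1 else 0) ℙ
      = q ^ 2 * (1 + q - q ^ 2) / p ^ 2 := by
  have hq2 : q = 1 - p := by linarith
  have hq1 : q < 1 := by linarith
  have hq0 : (0:ℝ) ≤ q := le_of_lt hq
  have hpne : p ≠ 0 := ne_of_gt hp
  have h1q : (1:ℝ) - q = p := by linarith
  set g : ℕ → ℝ := fun j => (j : ℝ) - if 1 ≤ j then 1 else 0 with hg
  have hgnn : ∀ j, 0 ≤ g j := by
    intro j
    rcases Nat.eq_zero_or_pos j with h | h
    · simp [hg, h]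
    · have h1 : 1 ≤ j := h
      have : (1:ℝ) ≤ (j:ℝ) := by exact_mod_cast h1
      simp only [hg, if_pos h1]
      linarith
  have hw : ∀ j, 0 ≤ q ^ j * p := fun j => mul_nonneg (pow_nonneg hq0 j) hp.le
  -- sums
  have hgeo := hasSum_geometric_of_lt_one hq0 hq1
  have hqn : ‖q‖ < 1 := by rw [Real.norm_eq_abs, abs_of_nonneg hq0]; exact hq1
  have hmg := hasSum_coe_mul_geometric_of_norm_lt_one hqn
  have hsq := hasSum_sq_mul_geometric hq0 hq1
  have S1 : HasSum (fun j => (q ^ j * p) * g j) (q ^ 2 / p) := by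
    have H := ((hmg.mul_left p).sub (hgeo.mul_left p)).add (hasSum_ite_eq 0 p)
    have hfe : (fun j : ℕ => p * ((j : ℝ) * q ^ j) - p * q ^ j
        + if j = 0 then p else 0) = fun j => (q ^ j * p) * g j := by
      funext j
      rcases Nat.eq_zero_or_pos j with h | h
      · subst h; simp [hg]
      · have h1 : 1 ≤ j := h
        rw [if_neg (Nat.pos_iff_ne_zero.mp h)]
        simp only [hg, if_pos h1]
        ring
    rw [hfe] at H
    convert H using 1
    · rfl
    rw [hq2]
    simp only [sub_sub_cancel]
    field_simp
    ring
  have S2 : HasSum (fun j => (q ^ j * p) * (g j) ^ 2)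
      (q * (1 + q) / p ^ 2 - 2 * q / p + q) := by
    have H := (((hsq.mul_left p).sub (hmg.mul_left (2 * p))).add
      (hgeo.mul_left p)).sub (hasSum_ite_eq 0 p)
    have hfe : (fun j : ℕ => p * ((j : ℝ) ^ 2 * q ^ j) - 2 * p * ((j : ℝ) * q ^ j)
        + p * q ^ j - if j = 0 then p else 0) = fun j => (q ^ j * p) * (g j) ^ 2 := by
      funext j
      rcases Nat.eq_zero_or_pos j with h | h
      · subst h; simp [hg]
      · have h1 : 1 ≤ j := h
        rw [if_neg (Nat.pos_iff_ne_zero.mp h)]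
        simp only [hg, if_pos h1]
        ring
    rw [hfe] at H
    convert H using 1
    · rfl
    rw [hq2]
    simp only [sub_sub_cancel]
    field_simp
    ring
  have I1 := discrete_integral hm hw hlaw g hgnn S1
  have I2 := discrete_integral hm hw hlaw (fun j => (g j) ^ 2)
    (fun j => sq_nonneg _) S2
  set X : Ω → ℝ := fun ω => (C ω : ℝ) - if 1 ≤ C ω then 1 else 0 with hX
  have hXeq : X = fun ω => g (C ω) := rfl
  have hXm : AEStronglyMeasurable X ℙ := by
    rw [hXeq]
    exact ((measurable_from_nat (f := g)).comp hm).aestronglyMeasurable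
  have hX2 : Integrable (fun ω => X ω ^ 2) ℙ := I2.1
  have hmem : MemLp X 2 ℙ := (memLp_two_iff_integrable_sq hXm).mpr hX2
  refine ⟨hmem, ?_⟩
  rw [variance_eq_sub hmem]
  have hEX : (∫ ω, X ω ∂ℙ) = q ^ 2 / p := I1.2
  have hEX2 : (∫ ω, X ω ^ 2 ∂ℙ) = q * (1 + q) / p ^ 2 - 2 * q / p + q := I2.2
  have h1 : ℙ[X ^ 2] = q * (1 + q) / p ^ 2 - 2 * q / p + q := by
    rw [← hEX2]; congr 1
  have h2 : ℙ[X] = q ^ 2 / p := hEX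
  rw [h1, h2, hq2]
  field_simp
  ring

/-- Variance of `S - K` in the coupling: if `C_k`, `2 ≤ k ≤ n`, are independent and
`C_k` is geometric with success probability `(k-1)/(k-1+θ)`, then
`Var(∑_{k=2}^n (C_k - 𝟙{C_k ≥ 1})) = ∑_{k=2}^n θ²(θ² + 3θ(k-1) + (k-1)²)/((k-1)²(k-1+θ)²)`. -/
theorem variance_segregating_sites_minus_cycles
    {Ω : Type*} [MeasureSpace Ω] [IsProbabilityMeasure (ℙ : Measure Ω)]
    (θ : ℝ) (hθ : 0 < θ) (n : ℕ) (hn : 2 ≤ n) (C : ℕ → Ω → ℕ)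
    (hmeas : ∀ k, 2 ≤ k → k ≤ n → Measurable (C k))
    (hindep : iIndepFun
      (fun k : (Finset.Icc 2 n : Finset ℕ) => C (k : ℕ)) ℙ)
    (hlaw : ∀ k, 2 ≤ k → k ≤ n → ∀ j : ℕ,
      ℙ {ω | C k ω = j} =
        ENNReal.ofReal ((θ / ((k : ℝ) - 1 + θ)) ^ j * (((k : ℝ) - 1) / ((k : ℝ) - 1 + θ)))) :
    variance (fun ω =>
        ∑ k ∈ Finset.Icc 2 n, ((C k ω : ℝ) - if 1 ≤ C k ω then 1 else 0)) ℙ =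
      ∑ k ∈ Finset.Icc 2 n,
        θ ^ 2 * (θ ^ 2 + 3 * θ * ((k : ℝ) - 1) + ((k : ℝ) - 1) ^ 2) /
          (((k : ℝ) - 1) ^ 2 * ((k : ℝ) - 1 + θ) ^ 2) := by
  set X : ℕ → Ω → ℝ := fun k ω => (C k ω : ℝ) - if 1 ≤ C k ω then 1 else 0 with hXdef
  -- per-k facts
  have key : ∀ k ∈ Finset.Icc 2 n, MemLp (X k) 2 ℙ ∧
      variance (X k) ℙ = θ ^ 2 * (θ ^ 2 + 3 * θ * ((k : ℝ) - 1) + ((k : ℝ) - 1) ^ 2) /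
        (((k : ℝ) - 1) ^ 2 * ((k : ℝ) - 1 + θ) ^ 2) := by
    intro k hk
    rw [Finset.mem_Icc] at hk
    obtain ⟨hk2, hkn⟩ := hk
    set a : ℝ := (k : ℝ) - 1 with ha
    have ha0 : 0 < a := by
      have : (2:ℝ) ≤ (k:ℝ) := by exact_mod_cast hk2
      simp only [ha]; linarith
    have haθ : 0 < a + θ := by linarith
    set p : ℝ := a / (a + θ) with hpdef
    set q : ℝ := θ / (a + θ) with hqdef
    have hp : 0 < p := div_pos ha0 haθ
    have hq : 0 < q := div_pos hθ haθ
    have hpq : p + q = 1 := by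
      rw [hpdef, hqdef]
      field_simp
    have hlaw' : ∀ j, ℙ {ω | C k ω = j} = ENNReal.ofReal (q ^ j * p) :=
      fun j => hlaw k hk2 hkn j
    have := var_aux (hmeas k hk2 hkn) hp hq hpq hlaw'
    refine ⟨this.1, ?_⟩
    rw [this.2]
    have hane : a ≠ 0 := ne_of_gt ha0
    have haθne : a + θ ≠ 0 := ne_of_gt haθ
    rw [hpdef, hqdef]
    field_simp
    ring
  have hsum : (fun ω => ∑ k ∈ Finset.Icc 2 n, X k ω) = ∑ k ∈ Finset.Icc 2 n, X k := by
    funext ω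
    simp [Finset.sum_apply]
  have hvar : variance (∑ k ∈ Finset.Icc 2 n, X k) ℙ
      = ∑ k ∈ Finset.Icc 2 n, variance (X k) ℙ := by
    apply IndepFun.variance_sum
    · exact fun k hk => (key k hk).1
    · intro i hi j hj hij
      have hii : i ∈ Finset.Icc 2 n := Finset.mem_coe.mp hi
      have hjj : j ∈ Finset.Icc 2 n := Finset.mem_coe.mp hj
      have hne : (⟨i, hii⟩ : (Finset.Icc 2 n : Finset ℕ)) ≠ ⟨j, hjj⟩ := by
        simp [Subtype.ext_iff, hij]
      have hCij : IndepFun (C i) (C j) ℙ := hindep.indepFun hne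
      exact hCij.comp
        (measurable_from_nat (f := fun m : ℕ => (m : ℝ) - if 1 ≤ m then 1 else 0))
        (measurable_from_nat (f := fun m : ℕ => (m : ℝ) - if 1 ≤ m then 1 else 0))
  calc variance (fun ω => ∑ k ∈ Finset.Icc 2 n, X k ω) ℙ
      = variance (∑ k ∈ Finset.Icc 2 n, X k) ℙ := by rw [hsum]
    _ = ∑ k ∈ Finset.Icc 2 n, variance (X k) ℙ := hvar
    _ = ∑ k ∈ Finset.Icc 2 n,
        θ ^ 2 * (θ ^ 2 + 3 * θ * ((k : ℝ) - 1) + ((k : ℝ) - 1) ^ 2) /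
          (((k : ℝ) - 1) ^ 2 * ((k : ℝ) - 1 + θ) ^ 2) :=
      Finset.sum_congr rfl fun k hk => (key k hk).2
end

section
/- Let $\theta > 0$ and $t \geq 0$, and for $n \geq 2$ set $\theta_n := \theta/\log n$. Then $$\lim_{n \to \infty} \sum_{k=2}^{\lfloor n^{t} \rfloor} \frac{\theta_n^2\big(\theta_n^2 + 3\theta_n (k-1) + (k-1)^2\big)}{(k-1)^2 (k-1+\theta_n)^2} = 0.$$ (This is the statement that $\mathrm{Var}\big(\tilde{S}(n,t) - \tilde{K}(n,t)\big) \to 0$ in the coupling of the number of segregating sites $\tilde S$ and the number of Ewens cycles $\tilde K$ with parameter $\theta/\log n$ and sample size $\lfloor n^{t} \rfloor$.) -/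
open Finset Filter

lemma sum_inv_sq_le' : ∀ M : ℕ, 1 ≤ M → ∑ m ∈ Finset.Icc 1 M, (1:ℝ)/(m:ℝ)^2 ≤ 2 - 1/M := by
  intro M hM
  induction M, hM using Nat.le_induction with
  | base => norm_num
  | succ M hM ih =>
    rw [Finset.sum_Icc_succ_top (by omega : 1 ≤ M + 1)]
    have hM' : (1:ℝ) ≤ (M:ℝ) := by exact_mod_cast hM
    have key : (1:ℝ)/((M:ℝ)+1)^2 ≤ 1/M - 1/(M+1) := by
      rw [div_sub_div _ _ (by linarith) (by linarith)]
      rw [div_le_div_iff₀ (by positivity) (by positivity)]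
      nlinarith
    push_cast
    linarith

lemma sum_inv_sq_le (M : ℕ) : ∑ m ∈ Finset.Icc 1 M, (1:ℝ)/(m:ℝ)^2 ≤ 2 := by
  rcases Nat.eq_zero_or_pos M with h | h
  · simp [h]
  · have h2 := sum_inv_sq_le' M h
    have h3 : (0:ℝ) ≤ 1/(M:ℝ) := by positivity
    linarith

lemma sum_shift_le (N : ℕ) : ∑ k ∈ Finset.Icc 2 N, (1:ℝ)/((k:ℝ)-1)^2 ≤ 2 := by
  have heq : Finset.Icc 2 N = Finset.map ⟨fun m => m+1, add_left_injective 1⟩ (Finset.Icc 1 (N-1)) := by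
    ext k
    simp only [Finset.mem_Icc, Finset.mem_map, Function.Embedding.coeFn_mk]
    constructor
    · rintro ⟨h1, h2⟩; exact ⟨k-1, by omega, by omega⟩
    · rintro ⟨m, ⟨h1, h2⟩, rfl⟩; omega
  rw [heq, Finset.sum_map]
  have : ∀ m ∈ Finset.Icc 1 (N-1), (1:ℝ)/(((m+1:ℕ):ℝ)-1)^2 = 1/(m:ℝ)^2 := by
    intro m _; push_cast; ring_nf
  simp only [Function.Embedding.coeFn_mk]
  rw [Finset.sum_congr rfl this]
  exact sum_inv_sq_le _


/-- For `θ > 0` and `t ≥ 0`, with `θ_n = θ/log n`,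
`∑_{k=2}^{⌊n^t⌋} θ_n²(θ_n² + 3θ_n(k-1) + (k-1)²)/((k-1)²(k-1+θ_n)²) → 0`
as `n → ∞`; i.e. `Var(S̃(n,t) - K̃(n,t)) → 0` in the coupling. -/
theorem variance_difference_tendsto_zero (θ : ℝ) (hθ : 0 < θ) (t : ℝ) (ht : 0 ≤ t) :
    Tendsto (fun n : ℕ =>
        ∑ k ∈ Finset.Icc 2 ⌊(n : ℝ) ^ t⌋₊,
          (θ / Real.log n) ^ 2 *
              ((θ / Real.log n) ^ 2 + 3 * (θ / Real.log n) * ((k : ℝ) - 1) + ((k : ℝ) - 1) ^ 2) /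
            (((k : ℝ) - 1) ^ 2 * ((k : ℝ) - 1 + θ / Real.log n) ^ 2))
      atTop (nhds 0) := by
  set a : ℕ → ℝ := fun n => θ / Real.log n with ha_def
  have ha_nonneg : ∀ n, 0 ≤ a n := by
    intro n
    apply div_nonneg hθ.le
    rcases Nat.eq_zero_or_pos n with h | h
    · simp [h]
    · exact Real.log_natCast_nonneg n
  have hlog : Tendsto (fun n : ℕ => Real.log n) atTop atTop :=
    Real.tendsto_log_atTop.comp tendsto_natCast_atTop_atTop
  have ha : Tendsto a atTop (nhds 0) := Tendsto.div_atTop tendsto_const_nhds hlog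
  have hg : Tendsto (fun n => 10 * (a n)^2) atTop (nhds 0) := by
    have := (ha.pow 2).const_mul (10:ℝ)
    simpa using this
  apply squeeze_zero' ?_ ?_ hg
  · filter_upwards with n
    apply Finset.sum_nonneg
    intro k hk
    simp only [Finset.mem_Icc] at hk
    have hm : (1:ℝ) ≤ (k:ℝ) - 1 := by
      have : (2:ℝ) ≤ (k:ℝ) := by exact_mod_cast hk.1
      linarith
    have h0 := ha_nonneg n
    apply div_nonneg
    · positivity
    · positivity
  · have hev : ∀ᶠ n : ℕ in atTop, a n ≤ 1 := ha.eventually (ge_mem_nhds (by norm_num) : ∀ᶠ x in nhds (0:ℝ), x ≤ 1)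
    filter_upwards [hev] with n hn
    have h0 := ha_nonneg n
    calc ∑ k ∈ Finset.Icc 2 ⌊(n : ℝ) ^ t⌋₊,
          (a n) ^ 2 * ((a n) ^ 2 + 3 * (a n) * ((k : ℝ) - 1) + ((k : ℝ) - 1) ^ 2) /
            (((k : ℝ) - 1) ^ 2 * ((k : ℝ) - 1 + a n) ^ 2)
        ≤ ∑ k ∈ Finset.Icc 2 ⌊(n : ℝ) ^ t⌋₊, 5 * (a n)^2 * (1/((k:ℝ)-1)^2) := by
          apply Finset.sum_le_sum
          intro k hk
          simp only [Finset.mem_Icc] at hk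
          set m : ℝ := (k:ℝ) - 1 with hm_def
          have hm : (1:ℝ) ≤ m := by
            have : (2:ℝ) ≤ (k:ℝ) := by exact_mod_cast hk.1
            simp [hm_def]; linarith
          have hnum : (a n) ^ 2 * ((a n) ^ 2 + 3 * (a n) * m + m ^ 2) ≤ 5 * (a n)^2 * m^2 := by
            have haa : a n ≤ m := hn.trans hm
            have hm0 : (0:ℝ) ≤ m := by linarith
            have h1 : a n ^ 2 * (a n * a n) ≤ a n ^ 2 * (m * m) :=
              mul_le_mul_of_nonneg_left (mul_le_mul haa haa h0 hm0) (sq_nonneg (a n))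
            have h2 : a n ^ 2 * (a n * m) ≤ a n ^ 2 * (m * m) :=
              mul_le_mul_of_nonneg_left (mul_le_mul_of_nonneg_right haa hm0) (sq_nonneg (a n))
            nlinarith [sq_nonneg (a n), sq_nonneg m]
          have hden : m^2 * m^2 ≤ m ^ 2 * (m + a n) ^ 2 := by
            have : m^2 ≤ (m + a n)^2 := by nlinarith
            exact mul_le_mul_of_nonneg_left this (sq_nonneg m)
          have hpos : (0:ℝ) < m^2 * m^2 := by positivity
          calc (a n) ^ 2 * ((a n) ^ 2 + 3 * (a n) * m + m ^ 2) / (m ^ 2 * (m + a n) ^ 2)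
              ≤ 5 * (a n)^2 * m^2 / (m^2 * m^2) := by
                apply div_le_div₀ (by positivity) hnum hpos hden
            _ = 5 * (a n)^2 * (1/m^2) := by field_simp
      _ = 5 * (a n)^2 * ∑ k ∈ Finset.Icc 2 ⌊(n : ℝ) ^ t⌋₊, (1/((k:ℝ)-1)^2) := by
          rw [Finset.mul_sum]
      _ ≤ 5 * (a n)^2 * 2 := by
          apply mul_le_mul_of_nonneg_left (sum_shift_le _) (by positivity)
      _ = 10 * (a n)^2 := by ring
end
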